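/- arXiv:1811.00182 — 4 statements merged into one kernel-verified Lean document; each statement's English description precedes it below -/
import Mathlib

section
/- Let R be an associative ring that is flat as a Z-algebra and let p be a prime. For a, b in the center Z(R/pR), choose lifts z, w in R. Then [z,w] lies in pR, the element (1/p)[z,w] mod p lies in Z(R/pR), and it is independent of the choice of lifts z and w. -/
/-- Flatness over `ℤ` means `R` is torsion-free, so multiplication (smul) by a
nonzero natural number is injective. -/
lemma statement0_smul_cancel (R : Type*) [Ring R] [Module.Flat ℤ R] {p : ℕ} (hp : p ≠ 0)
    {x y : R} (h : p • x = p • y) : x = y := by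
  have hreg : IsSMulRegular ℤ (p : ℤ) := fun a b hab => by
    have h2 : (p : ℤ) * a = (p : ℤ) * b := by simpa [zsmul_eq_mul] using hab
    exact mul_left_cancel₀ (by exact_mod_cast hp) h2
  have hR : IsSMulRegular R ((p : ℤ)) :=
    ((TensorProduct.rid ℤ R).isSMulRegular_congr ((p : ℤ))).mp (hreg.lTensor R)
  apply hR
  simpa [natCast_zsmul] using h

/-- Let `R` be an associative ring, flat as a `ℤ`-algebra, and `p` a prime.
For `a, b` in the center of `R/pR` with lifts `z, w : R` (centrality of `z`, `w` mod `p` is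
expressed elementwise), the commutator `[z,w]` lies in `pR`; the element `u` with
`[z,w] = p·u` is central mod `p`, and its class mod `p` is independent of the choice of
lifts `z', w'` of the same central elements. -/
theorem statement0 (R : Type*) [Ring R] [Module.Flat ℤ R] (p : ℕ) (hp : p.Prime)
    (z w z' w' : R)
    (hz : ∀ r : R, ∃ y, z * r - r * z = (p : R) * y)
    (hw : ∀ r : R, ∃ y, w * r - r * w = (p : R) * y)
    (hzz' : ∃ y, z - z' = (p : R) * y)
    (hww' : ∃ y, w - w' = (p : R) * y) :
    (∃ u, z * w - w * z = (p : R) * u) ∧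
    ∀ u, z * w - w * z = (p : R) * u →
      (∀ r : R, ∃ y, u * r - r * u = (p : R) * y) ∧
      ∀ u', z' * w' - w' * z' = (p : R) * u' → ∃ y, u - u' = (p : R) * y := by
  have hp0 : p ≠ 0 := hp.ne_zero
  have hm : ∀ x : R, (p : R) * x = p • x := fun x => (nsmul_eq_mul p x).symm
  constructor
  · exact hz w
  intro u hu
  rw [hm] at hu
  constructor
  · -- u is central mod p
    intro r
    obtain ⟨y1, h1⟩ := hz r
    obtain ⟨y2, h2⟩ := hw r
    obtain ⟨a, ha⟩ := hz y2
    obtain ⟨c, hc⟩ := hw y1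
    rw [hm] at h1 h2 ha hc
    refine ⟨a - c, ?_⟩
    rw [hm]
    apply statement0_smul_cancel R hp0
    calc p • (u * r - r * u) = (p • u) * r - r * (p • u) := by
          rw [smul_sub, smul_mul_assoc, mul_smul_comm]
      _ = (z * w - w * z) * r - r * (z * w - w * z) := by rw [← hu]
      _ = z * (w * r - r * w) + (z * r - r * z) * w
            - (w * (z * r - r * z) + (w * r - r * w) * z) := by noncomm_ring
      _ = z * (p • y2) + (p • y1) * w - (w * (p • y1) + (p • y2) * z) := by rw [h1, h2]
      _ = p • ((z * y2 - y2 * z) - (w * y1 - y1 * w)) := by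
          simp only [mul_smul_comm, smul_mul_assoc, smul_sub, smul_add]
          abel
      _ = p • ((p • a) - (p • c)) := by rw [ha, hc]
      _ = p • (p • (a - c)) := by simp only [smul_sub]
  · -- independence of lifts
    intro u' hu'
    obtain ⟨s, hs⟩ := hzz'
    obtain ⟨t, ht⟩ := hww'
    obtain ⟨yz, hyz⟩ := hz t
    obtain ⟨yw, hyw⟩ := hw s
    rw [hm] at hu' hs ht hyz hyw
    refine ⟨yz - yw + (t * s - s * t), ?_⟩
    rw [hm]
    apply statement0_smul_cancel R hp0
    have hw' : w' = w - p • t := by rw [← ht]; abel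
    calc p • (u - u')
        = (z * w - w * z) - (z' * w' - w' * z') := by rw [smul_sub, ← hu, ← hu']
      _ = z * (w - w') - (w - w') * z + ((z - z') * w' - w' * (z - z')) := by noncomm_ring
      _ = z * (p • t) - (p • t) * z + ((p • s) * w' - w' * (p • s)) := by rw [hs, ht]
      _ = p • ((z * t - t * z) + (s * w' - w' * s)) := by
          rw [mul_smul_comm, smul_mul_assoc, smul_mul_assoc, mul_smul_comm,
            ← smul_sub, ← smul_sub, ← smul_add]
      _ = p • ((p • yz) + (s * (w - p • t) - (w - p • t) * s)) := by rw [hyz, ← hw']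
      _ = p • ((p • yz) + ((s * w - w * s) - p • (s * t - t * s))) := by
          congr 2
          simp only [mul_sub, sub_mul, mul_smul_comm, smul_mul_assoc, smul_sub]
          abel
      _ = p • ((p • yz) + (-(p • yw) - p • (s * t - t * s))) := by
          rw [show s * w - w * s = -(w * s - s * w) by abel, hyw]
      _ = p • (p • (yz - yw + (t * s - s * t))) := by
          congr 1
          simp only [smul_sub, smul_add, smul_neg]
          abel
end

section
/- Let R be an associative ring that is flat as a Z-algebra and p a prime. Define {a,b} on Z(R/pR) by choosing lifts z,w of a,b and setting {a,b} = (1/p)[z,w] mod p. Then {·,·} is a Poisson bracket on Z(R/pR): it is biadditive, antisymmetric, satisfies the Leibniz rule {a, bc} = {a,b}c + b{a,c}, and satisfies the Jacobi identity. -/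
open scoped TensorProduct

/-- A flat ℤ-module is torsion-free: multiplication by a prime `p` kills only `0`. -/
private lemma pcancel {R : Type*} [Ring R] [Module.Flat ℤ R] {p : ℕ} (hp : p.Prime)
    {x : R} (h : (p : R) * x = 0) : x = 0 := by
  have hZ : IsSMulRegular ℤ (p : ℤ) := by
    intro a b hab
    exact mul_left_cancel₀ (by exact_mod_cast hp.ne_zero) hab
  have hT : IsSMulRegular (ℤ ⊗[ℤ] R) (p : ℤ) := hZ.rTensor R
  have hR : IsSMulRegular R (p : ℤ) :=
    hT.of_injective (TensorProduct.lid ℤ R).symm.toLinearMap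
      (TensorProduct.lid ℤ R).symm.injective
  have : (p : ℤ) • x = (p : ℤ) • (0 : R) := by
    rw [smul_zero, zsmul_eq_mul]; push_cast; exact h
  exact hR this

/-- For `R` flat over `ℤ` and `p` prime, the bracket on the center of
`R/pR` defined by `{a,b} = (1/p)[z,w] mod p` for lifts `z, w` is a Poisson bracket:
biadditive, antisymmetric, Leibniz, and Jacobi.  All statements are expressed via lifts:
`Br z w u` means `zw - wz = p·u`, centrality mod `p` is elementwise, and equality in
`R/pR` is congruence mod `pR`. -/
theorem statement1 (R : Type*) [Ring R] [Module.Flat ℤ R] (p : ℕ) (hp : p.Prime)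
    -- `C z` : the class of `z` is central in `R/pR`
    (C : R → Prop) (hC : ∀ z, C z ↔ ∀ r : R, ∃ y, z * r - r * z = (p : R) * y)
    -- `Br z w u` : `u` represents the bracket `{z̄, w̄}`
    (Br : R → R → R → Prop) (hBr : ∀ z w u, Br z w u ↔ z * w - w * z = (p : R) * u) :
    -- additivity in the first variable
    (∀ z z' w u u' v, C z → C z' → C w → Br z w u → Br z' w u' → Br (z + z') w v →
      ∃ y, v - (u + u') = (p : R) * y) ∧
    -- additivity in the second variable
    (∀ z w w' u u' v, C z → C w → C w' → Br z w u → Br z w' u' → Br z (w + w') v →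
      ∃ y, v - (u + u') = (p : R) * y) ∧
    -- antisymmetry
    (∀ z w u u', C z → C w → Br z w u → Br w z u' → ∃ y, u + u' = (p : R) * y) ∧
    -- Leibniz rule : {z, w w'} = {z,w} w' + w {z,w'}
    (∀ z w w' u u' v, C z → C w → C w' → Br z w u → Br z w' u' → Br z (w * w') v →
      ∃ y, v - (u * w' + w * u') = (p : R) * y) ∧
    -- Jacobi identity : {z,{w,v}} + {w,{v,z}} + {v,{z,w}} = 0
    (∀ z w v a b c u₁ u₂ u₃, C z → C w → C v →
      Br w v a → Br z a u₁ →
      Br v z b → Br w b u₂ →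
      Br z w c → Br v c u₃ →
      ∃ y, u₁ + u₂ + u₃ = (p : R) * y) := by
  have hc : ∀ x : R, (p : R) * x = x * (p : R) := fun x => (Nat.cast_commute p x).eq
  have cancel : ∀ x y : R, (p : R) * x = (p : R) * y → x = y := by
    intro x y h
    have := pcancel hp (x := x - y) (by rw [mul_sub, h, sub_self])
    exact sub_eq_zero.mp this
  have aux : ∀ z a u : R, z * a - a * z = (p : R) * u →
      (p : R) * ((p : R) * u) = z * ((p : R) * a) - ((p : R) * a) * z := by
    intro z a u h
    rw [← h, mul_sub, ← mul_assoc, ← mul_assoc, hc z, mul_assoc z]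
  refine ⟨?_, ?_, ?_, ?_, ?_⟩
  · -- additivity in the first variable
    intro z z' w u u' v _ _ _ h1 h2 h3
    rw [hBr] at h1 h2 h3
    refine ⟨0, ?_⟩
    rw [mul_zero, sub_eq_zero]
    apply cancel
    rw [mul_add, ← h1, ← h2, ← h3]
    noncomm_ring
  · -- additivity in the second variable
    intro z w w' u u' v _ _ _ h1 h2 h3
    rw [hBr] at h1 h2 h3
    refine ⟨0, ?_⟩
    rw [mul_zero, sub_eq_zero]
    apply cancel
    rw [mul_add, ← h1, ← h2, ← h3]
    noncomm_ring
  · -- antisymmetry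
    intro z w u u' _ _ h1 h2
    rw [hBr] at h1 h2
    refine ⟨0, ?_⟩
    rw [mul_zero]
    apply pcancel hp
    rw [mul_add, ← h1, ← h2]
    noncomm_ring
  · -- Leibniz rule
    intro z w w' u u' v _ _ _ h1 h2 h3
    rw [hBr] at h1 h2 h3
    refine ⟨0, ?_⟩
    rw [mul_zero, sub_eq_zero]
    apply cancel
    rw [← h3, mul_add, ← mul_assoc (p:R) u w', ← h1, ← mul_assoc (p:R) w u', hc w,
      mul_assoc w (p:R) u', ← h2]
    noncomm_ring
  · -- Jacobi identity
    intro z w v a b c u₁ u₂ u₃ _ _ _ h1 h2 h3 h4 h5 h6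
    rw [hBr] at h1 h2 h3 h4 h5 h6
    refine ⟨0, ?_⟩
    rw [mul_zero]
    have e1 := aux z a u₁ h2
    have e2 := aux w b u₂ h4
    have e3 := aux v c u₃ h6
    rw [← h1] at e1
    rw [← h3] at e2
    rw [← h5] at e3
    have k1 : (p : R) * ((p : R) * (u₁ + u₂ + u₃)) = 0 := by
      simp only [mul_add]
      rw [e1, e2, e3]
      noncomm_ring
    exact pcancel hp (pcancel hp k1)
end

section
/- Let k be a field of characteristic p > 0. The center of the first Weyl algebra A₁(k) is the polynomial subalgebra k[x^p, ∂^p]. -/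
/-- The defining relation of the first Weyl algebra: `∂ * x = x * ∂ + 1`,
where `x = ι false` and `∂ = ι true`. -/
inductive WeylRel (k : Type) [CommRing k] : FreeAlgebra k Bool → FreeAlgebra k Bool → Prop
  | rel : WeylRel k (FreeAlgebra.ι k true * FreeAlgebra.ι k false)
      (FreeAlgebra.ι k false * FreeAlgebra.ι k true + 1)

/-- The first Weyl algebra `A₁(k) = k⟨x, ∂⟩/(∂x - x∂ - 1)`. -/
abbrev Weyl (k : Type) [CommRing k] := RingQuot (WeylRel k)

/-- The generator `x` of the first Weyl algebra. -/
noncomputable def Weyl.x (k : Type) [CommRing k] : Weyl k :=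
  RingQuot.mkRingHom (WeylRel k) (FreeAlgebra.ι k false)

/-- The generator `∂` of the first Weyl algebra. -/
noncomputable def Weyl.d (k : Type) [CommRing k] : Weyl k :=
  RingQuot.mkRingHom (WeylRel k) (FreeAlgebra.ι k true)

/-!
Let `A₁(k)` act on `k[X₀, X₁]` by `x ↦ X₀ ·` and `∂ ↦ ∂/∂X₀ + X₁ ·`. Evaluating at `1` gives
the normal-ordered symbol `x^i ∂^j ↦ X₀^i X₁^j`, which is injective because the `x^i ∂^j` span
`A₁(k)`. Multiplication by `X₁` and the operator `∂/∂X₁ + X₀ ·` commute with the action, so on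
symbols the commutators `[∂, -]` and `[-, x]` become `∂/∂X₀` and `∂/∂X₁`. Hence `z` is central iff
its symbol has vanishing partial derivatives, which in characteristic `p` means that it is a
polynomial in `X₀^p` and `X₁^p`; and the symbol of `q(x^p, ∂^p)` is exactly `q(X₀^p, X₁^p)`.
-/

namespace MvPolynomial

variable {σ R : Type*}

theorem pderiv_pderiv_comm [CommRing R] (i j : σ)
    (f : MvPolynomial σ R) : pderiv i (pderiv j f) = pderiv j (pderiv i f) := by
  let D : Derivation R (MvPolynomial σ R) (MvPolynomial σ R) := pderiv i
  let E : Derivation R (MvPolynomial σ R) (MvPolynomial σ R) := pderiv j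
  have : ⁅D, E⁆ = 0 := by
    refine derivation_ext fun n => ?_
    classical simp [D, E, Derivation.commutator_apply, pderiv_X, Pi.single_apply, apply_ite]
  simpa [D, E, sub_eq_zero, Derivation.commutator_apply] using congr($this f)

theorem linearIndependent_X_zero_pow_mul_X_one_pow [CommSemiring R] :
    LinearIndependent R fun ij : ℕ × ℕ => (X 0 ^ ij.1 * X 1 ^ ij.2 : MvPolynomial (Fin 2) R) := by
  have hinj : Function.Injective
      fun ij : ℕ × ℕ => (Finsupp.single 0 ij.1 + Finsupp.single 1 ij.2 : Fin 2 →₀ ℕ) :=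
    fun ij ij' h => Prod.ext (by simpa using congr($h 0)) (by simpa using congr($h 1))
  have h : (fun ij : ℕ × ℕ => (X 0 ^ ij.1 * X 1 ^ ij.2 : MvPolynomial (Fin 2) R)) =
      basisMonomials (Fin 2) R ∘ fun ij => Finsupp.single 0 ij.1 + Finsupp.single 1 ij.2 := by
    funext ij
    simp [X_pow_eq_monomial, monomial_mul]
  rw [h]
  exact (basisMonomials (Fin 2) R).linearIndependent.comp _ hinj

theorem mem_range_expand_of_forall_dvd [CommSemiring R] {p : ℕ} {f : MvPolynomial σ R}
    (h : ∀ m ∈ f.support, ∀ i, p ∣ m i) : f ∈ (expand p).range := by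
  rw [f.as_sum]
  refine Subalgebra.sum_mem _ fun m hm =>
    (AlgHom.mem_range _).mpr ⟨monomial (m.mapRange (· / p) (Nat.zero_div p)) (coeff m f), ?_⟩
  rw [expand_monomial]
  congr
  ext i
  simp [Nat.mul_div_cancel' (h m hm i)]

theorem dvd_of_mem_support_of_pderiv_eq_zero [CommRing R] [IsDomain R] (p : ℕ) [CharP R p]
    {f : MvPolynomial σ R} {i : σ} (h : pderiv i f = 0) {m : σ →₀ ℕ} (hm : m ∈ f.support) :
    p ∣ m i := by
  rcases Nat.eq_zero_or_pos (m i) with hmi | hmi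
  · simp [hmi]
  have hle : Finsupp.single i 1 ≤ m := Finsupp.single_le_iff.mpr hmi
  have hcoeff := congr(coeff (m - Finsupp.single i 1) $h)
  rw [coeff_pderiv, tsub_add_cancel_of_le hle, coeff_zero, Finsupp.tsub_apply,
    Finsupp.single_eq_same, ← Nat.cast_add_one, Nat.sub_add_cancel hmi] at hcoeff
  exact (CharP.cast_eq_zero_iff R p _).mp
    ((mul_eq_zero.mp hcoeff).resolve_left (mem_support_iff.mp hm))

theorem mem_range_expand_of_pderiv_eq_zero [CommRing R] [IsDomain R] (p : ℕ) [CharP R p]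
    {f : MvPolynomial σ R} (h : ∀ i, pderiv i f = 0) : f ∈ (expand p).range :=
  mem_range_expand_of_forall_dvd fun _ hm i => dvd_of_mem_support_of_pderiv_eq_zero p (h i) hm

end MvPolynomial

namespace Weyl

open MvPolynomial

variable {k : Type} [CommRing k]

theorem d_mul_x : d k * x k = x k * d k + 1 := by
  unfold x d
  simpa only [map_mul, map_add, map_one] using RingQuot.mkRingHom_rel (WeylRel.rel (k := k))

theorem mkAlgHom_ι_false : RingQuot.mkAlgHom k (WeylRel k) (FreeAlgebra.ι k false) = x k := by
  rw [x, ← RingQuot.mkAlgHom_coe k]; rfl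

theorem mkAlgHom_ι_true : RingQuot.mkAlgHom k (WeylRel k) (FreeAlgebra.ι k true) = d k := by
  rw [d, ← RingQuot.mkAlgHom_coe k]; rfl

theorem adjoin_x_d : Algebra.adjoin k {x k, d k} = ⊤ := by
  have : ({x k, d k} : Set (Weyl k)) =
      RingQuot.mkAlgHom k (WeylRel k) '' Set.range (FreeAlgebra.ι k) := by
    ext w
    simp [mkAlgHom_ι_false, mkAlgHom_ι_true, eq_comm]
  rw [this, Algebra.adjoin_image, FreeAlgebra.adjoin_range_ι, Algebra.map_top,
    AlgHom.range_eq_top]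
  exact RingQuot.mkAlgHom_surjective k _

theorem commute_of_commute_x_d {A : Type*} [Semiring A] [Algebra k A] (f : Weyl k →ₐ[k] A)
    {a : A} (hx : Commute (f (x k)) a) (hd : Commute (f (d k)) a) (w : Weyl k) :
    Commute (f w) a := by
  have mem_iff (y : Weyl k) : y ∈ (Subalgebra.centralizer k {a}).comap f ↔ Commute (f y) a := by
    simp [Subalgebra.mem_centralizer_iff, commute_iff_eq, eq_comm]
  have : Algebra.adjoin k {x k, d k} ≤ (Subalgebra.centralizer k {a}).comap f := by
    rw [Algebra.adjoin_le_iff]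
    rintro _ (rfl | rfl)
    exacts [(mem_iff _).mpr hx, (mem_iff _).mpr hd]
  exact (mem_iff w).mp (this (adjoin_x_d.ge trivial))

theorem mem_center_of_commute_x_d {z : Weyl k} (hx : Commute (x k) z) (hd : Commute (d k) z) :
    z ∈ Subalgebra.center k (Weyl k) :=
  Subalgebra.mem_center_iff.mpr fun w => (commute_of_commute_x_d (AlgHom.id k _) hx hd w).eq

theorem d_pow_succ_mul_x (j : ℕ) :
    d k ^ (j + 1) * x k = x k * d k ^ (j + 1) + (j + 1) • d k ^ j := by
  induction j with
  | zero => simp [d_mul_x]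
  | succ j ih =>
    rw [pow_succ', mul_assoc, ih, mul_add, ← mul_assoc, d_mul_x, mul_smul_comm, ← pow_succ',
      add_mul, one_mul, mul_assoc, ← pow_succ', add_assoc, add_comm (d k ^ (j + 1)), ← succ_nsmul]

section Lift

variable {A : Type*} [Semiring A] [Algebra k A]

noncomputable def lift (a b : A) (h : b * a = a * b + 1) : Weyl k →ₐ[k] A :=
  RingQuot.liftAlgHom k ⟨FreeAlgebra.lift k fun i => if i then b else a, by
    rintro _ _ ⟨⟩
    simpa using h⟩

@[simp]
theorem lift_x (a b : A) (h : b * a = a * b + 1) : lift a b h (x k) = a := by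
  rw [← mkAlgHom_ι_false, lift, RingQuot.liftAlgHom_mkAlgHom_apply]; simp

@[simp]
theorem lift_d (a b : A) (h : b * a = a * b + 1) : lift a b h (d k) = b := by
  rw [← mkAlgHom_ι_true, lift, RingQuot.liftAlgHom_mkAlgHom_apply]; simp

end Lift

theorem span_x_pow_mul_d_pow :
    Submodule.span k (Set.range fun ij : ℕ × ℕ => x k ^ ij.1 * d k ^ ij.2) = ⊤ := by
  set M := Submodule.span k (Set.range fun ij : ℕ × ℕ => x k ^ ij.1 * d k ^ ij.2)
  have mem (i j : ℕ) : x k ^ i * d k ^ j ∈ M := Submodule.subset_span ⟨(i, j), rfl⟩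
  have closed_of_generators (w : Weyl k) (hw : ∀ i j, x k ^ i * d k ^ j * w ∈ M) :
      M ≤ M.comap (LinearMap.mulRight k w) :=
    Submodule.span_le.mpr <| Set.range_subset_iff.mpr fun ij => hw ij.1 ij.2
  have closed (w : Weyl k) : M ≤ M.comap (LinearMap.mulRight k w) := by
    induction (adjoin_x_d.ge trivial : w ∈ Algebra.adjoin k {x k, d k}) using
      Algebra.adjoin_induction with
    | mem w hw =>
      apply closed_of_generators
      rcases hw with rfl | rfl
      · rintro i (_ | j)
        · simpa [← pow_succ] using mem (i + 1) 0
        · rw [mul_assoc, d_pow_succ_mul_x, mul_add, ← mul_assoc, ← pow_succ, mul_smul_comm]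
          exact add_mem (mem _ _) (Submodule.smul_of_tower_mem _ _ (mem _ _))
      · intro i j
        simpa [mul_assoc, ← pow_succ] using mem i (j + 1)
    | algebraMap r =>
      intro v hv
      simpa [← Algebra.commutes, ← Algebra.smul_def] using M.smul_mem r hv
    | add w w' _ _ hw hw' =>
      intro v hv
      simpa [mul_add] using add_mem (show v * w ∈ M from hw hv) (show v * w' ∈ M from hw' hv)
    | mul w w' _ _ hw hw' =>
      intro v hv
      simpa [mul_assoc] using (hw' (hw hv) : v * w * w' ∈ M)
  exact eq_top_iff.mpr fun w _ => by simpa using closed w (mem 0 0)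

noncomputable def rep : Weyl k →ₐ[k] Module.End k (MvPolynomial (Fin 2) k) :=
  lift (LinearMap.mulLeft k (X 0)) ((pderiv 0).toLinearMap + LinearMap.mulLeft k (X 1)) <| by
    refine LinearMap.ext fun f => ?_
    simp only [Module.End.mul_apply, LinearMap.add_apply, LinearMap.mulLeft_apply,
      Derivation.coeFn_coe, Derivation.leibniz, pderiv_X_self, smul_eq_mul, Module.End.one_apply]
    ring

noncomputable def symbol : Weyl k →ₗ[k] MvPolynomial (Fin 2) k :=
  LinearMap.applyₗ 1 ∘ₗ rep.toLinearMap

theorem symbol_apply (w : Weyl k) : symbol w = rep w 1 := rfl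

theorem symbol_one : symbol (1 : Weyl k) = 1 := by
  simp [symbol_apply]

theorem commute_rep_mulLeft_X_one (w : Weyl k) :
    Commute (rep w) (LinearMap.mulLeft k (X 1)) := by
  refine commute_of_commute_x_d rep ?_ ?_ w <;> refine LinearMap.ext fun f => ?_ <;>
    simp [rep, Module.End.mul_apply, Derivation.leibniz, mul_left_comm, mul_add]

theorem commute_rep_pderiv_one_add_mulLeft_X_zero (w : Weyl k) :
    Commute (rep w) ((pderiv 1).toLinearMap + LinearMap.mulLeft k (X 0)) := by
  refine commute_of_commute_x_d rep ?_ ?_ w <;> refine LinearMap.ext fun f => ?_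
  · simp [rep, Module.End.mul_apply, Derivation.leibniz, pderiv_X]
    ring
  · simp [rep, Module.End.mul_apply, Derivation.leibniz, pderiv_X]
    rw [pderiv_pderiv_comm 0 1]
    ring

theorem symbol_x_mul (w : Weyl k) : symbol (x k * w) = X 0 * symbol w := by
  simp [symbol_apply, rep]

theorem symbol_d_mul (w : Weyl k) :
    symbol (d k * w) = pderiv 0 (symbol w) + X 1 * symbol w := by
  simp [symbol_apply, rep]

theorem symbol_mul_d (w : Weyl k) : symbol (w * d k) = X 1 * symbol w := by
  have h := congr($((commute_rep_mulLeft_X_one w).eq) 1)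
  simpa [symbol_apply, rep] using h

theorem symbol_mul_x (w : Weyl k) :
    symbol (w * x k) = pderiv 1 (symbol w) + X 0 * symbol w := by
  have h := congr($((commute_rep_pderiv_one_add_mulLeft_X_zero w).eq) 1)
  simpa [symbol_apply, rep] using h

theorem symbol_x_pow_mul (i : ℕ) (w : Weyl k) : symbol (x k ^ i * w) = X 0 ^ i * symbol w := by
  induction i with
  | zero => simp
  | succ i ih => rw [pow_succ', mul_assoc, symbol_x_mul, ih, pow_succ', mul_assoc]

theorem symbol_mul_d_pow (j : ℕ) (w : Weyl k) : symbol (w * d k ^ j) = X 1 ^ j * symbol w := by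
  induction j with
  | zero => simp
  | succ j ih => rw [pow_succ, ← mul_assoc, symbol_mul_d, ih, pow_succ', mul_assoc]

theorem symbol_x_pow_mul_d_pow (i j : ℕ) :
    symbol (x k ^ i * d k ^ j) = X 0 ^ i * X 1 ^ j := by
  rw [symbol_x_pow_mul, ← one_mul (d k ^ j), symbol_mul_d_pow, symbol_one, mul_one]

theorem symbol_injective : Function.Injective (symbol (k := k)) := by
  set v := fun ij : ℕ × ℕ => x k ^ ij.1 * d k ^ ij.2
  have hsurj : Function.Surjective (Finsupp.linearCombination k v) := by
    rw [← LinearMap.range_eq_top, Finsupp.range_linearCombination, span_x_pow_mul_d_pow]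
  refine Function.Injective.of_comp_right ?_ hsurj
  have h := linearIndependent_X_zero_pow_mul_X_one_pow (R := k)
  unfold LinearIndependent at h
  convert h using 1
  ext c : 1
  simp [v, Finsupp.linearCombination_apply, map_finsuppSum, symbol_x_pow_mul_d_pow]

theorem mem_center_iff_pderiv_symbol_eq_zero {z : Weyl k} :
    z ∈ Subalgebra.center k (Weyl k) ↔ ∀ i, pderiv i (symbol z) = 0 := by
  have hd : pderiv 0 (symbol z) = symbol (d k * z - z * d k) := by
    simp [symbol_d_mul, symbol_mul_d]
  have hx : pderiv 1 (symbol z) = symbol (z * x k - x k * z) := by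
    simp [symbol_x_mul, symbol_mul_x]
  rw [Fin.forall_fin_two, hd, hx, (map_eq_zero_iff _ symbol_injective),
    (map_eq_zero_iff _ symbol_injective), sub_eq_zero, sub_eq_zero]
  exact ⟨fun hz => ⟨Subalgebra.mem_center_iff.mp hz (d k),
    (Subalgebra.mem_center_iff.mp hz (x k)).symm⟩,
    fun ⟨hdz, hzx⟩ => mem_center_of_commute_x_d hzx.symm hdz⟩

section CharP

variable (p : ℕ) [CharP k p]

theorem x_pow_mem_center : x k ^ p ∈ Subalgebra.center k (Weyl k) := by
  refine mem_center_iff_pderiv_symbol_eq_zero.mpr fun i => ?_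
  rw [← mul_one (x k ^ p), symbol_x_pow_mul, symbol_one, mul_one, pderiv_pow,
    CharP.cast_eq_zero, zero_mul, zero_mul]

theorem d_pow_mem_center : d k ^ p ∈ Subalgebra.center k (Weyl k) := by
  refine mem_center_iff_pderiv_symbol_eq_zero.mpr fun i => ?_
  rw [← one_mul (d k ^ p), symbol_mul_d_pow, symbol_one, mul_one, pderiv_pow,
    CharP.cast_eq_zero, zero_mul, zero_mul]

noncomputable def centerHom : MvPolynomial (Fin 2) k →ₐ[k] Subalgebra.center k (Weyl k) :=
  aeval ![⟨x k ^ p, x_pow_mem_center p⟩, ⟨d k ^ p, d_pow_mem_center p⟩]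

theorem centerHom_X_zero : (centerHom (k := k) p (X 0) : Weyl k) = x k ^ p := by
  simp [centerHom]

theorem centerHom_X_one : (centerHom (k := k) p (X 1) : Weyl k) = d k ^ p := by
  simp [centerHom]

theorem symbol_centerHom (q : MvPolynomial (Fin 2) k) :
    symbol (centerHom p q : Weyl k) = expand p q := by
  induction q using MvPolynomial.induction_on with
  | C a => simp [centerHom, symbol_one, C_eq_smul_one]
  | add q q' hq hq' => simp only [map_add, Subalgebra.coe_add, hq, hq']
  | mul_X q i ih =>
    rw [map_mul, map_mul, expand_X, Subalgebra.coe_mul, mul_comm _ (X i ^ p)]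
    obtain rfl | rfl : i = 0 ∨ i = 1 := by omega
    · rw [centerHom_X_zero, ← Subalgebra.mem_center_iff.mp (centerHom p q).2,
        symbol_x_pow_mul, ih]
    · rw [centerHom_X_one, symbol_mul_d_pow, ih]

theorem centerHom_injective (hp : p ≠ 0) : Function.Injective (centerHom (k := k) p) :=
  fun q q' h => expand_injective (Nat.pos_of_ne_zero hp) <| by
    rw [← symbol_centerHom, ← symbol_centerHom, h]

theorem centerHom_surjective [IsDomain k] : Function.Surjective (centerHom (k := k) p) := by
  rintro ⟨z, hz⟩
  obtain ⟨q, hq⟩ := mem_range_expand_of_pderiv_eq_zero p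
    (mem_center_iff_pderiv_symbol_eq_zero.mp hz)
  exact ⟨q, Subtype.ext (symbol_injective (by rw [symbol_centerHom]; exact hq))⟩

theorem center_eq_adjoin_x_pow_d_pow [IsDomain k] :
    Subalgebra.center k (Weyl k) = Algebra.adjoin k {x k ^ p, d k ^ p} := by
  calc Subalgebra.center k (Weyl k)
      = (centerHom p).range.map (Subalgebra.center k (Weyl k)).val := by
        rw [(AlgHom.range_eq_top _).mpr (centerHom_surjective p), Algebra.map_top,
          Subalgebra.range_val]
    _ = Algebra.adjoin k {x k ^ p, d k ^ p} := by
        rw [centerHom, ← Algebra.adjoin_range_eq_range_aeval, AlgHom.map_adjoin,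
          Matrix.range_cons_cons_empty, Set.image_pair]
        rfl

end CharP

end Weyl

/-- Over a field `k` of characteristic `p > 0`, the center of the first
Weyl algebra `A₁(k)` is the subalgebra generated by `x^p` and `∂^p`, and it is isomorphic
as a `k`-algebra to a polynomial ring in two variables via `X₀ ↦ x^p`, `X₁ ↦ ∂^p`. -/
theorem statement6 (k : Type) [Field k] (p : ℕ) (hp : p.Prime) [CharP k p] :
    Subalgebra.center k (Weyl k) = Algebra.adjoin k {Weyl.x k ^ p, Weyl.d k ^ p} ∧
    ∃ e : MvPolynomial (Fin 2) k ≃ₐ[k] Subalgebra.center k (Weyl k),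
      (e (MvPolynomial.X 0) : Weyl k) = Weyl.x k ^ p ∧
      (e (MvPolynomial.X 1) : Weyl k) = Weyl.d k ^ p := by
  refine ⟨Weyl.center_eq_adjoin_x_pow_d_pow p, ?_⟩
  let e := AlgEquiv.ofBijective (Weyl.centerHom (k := k) p)
    ⟨Weyl.centerHom_injective p hp.ne_zero, Weyl.centerHom_surjective p⟩
  exact ⟨e, Weyl.centerHom_X_zero p, Weyl.centerHom_X_one p⟩
end

section
/- Let R and S be rings and suppose S^op ≅ End_R(P) for a finitely generated projective generator P of left R-modules, with R flat over Z. Then for every prime p, the Morita equivalence between R/pR and S/pS induces an isomorphism of centers Z(R/pR) ≅ Z(S/pS) that preserves the mod-p-reduction Poisson brackets. -/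
/-- The reduction `R/pR` of a ring `R` modulo a prime `p`, realized as the quotient of `R`
by the two-sided ideal generated by `p`. -/
abbrev RedModP (R : Type) [Ring R] (p : ℕ) : Type :=
  RingQuot (fun a b : R => a = (p : R) ∧ b = 0)

/-- The quotient map `R → R/pR`. -/
noncomputable def RedModP.mk (R : Type) [Ring R] (p : ℕ) : R →+* RedModP R p :=
  RingQuot.mkRingHom _

/-!
Write `P` as a retract of `Rⁿ` (projectivity) and `R` as a retract of `Pᵐ` via
`F : Pᵐ → R`, `G : R → Pᵐ` (generator).
Right multiplication by `z`, compressed to `P`, gives `σ z ∈ End P`. If `z` is central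
mod `p`, then `σ z` is central mod `p`, acts on `P` as `z` mod `p`, and
`σ z ∘ σ w ≡ σ (w z)` mod `p²`: the error is a product of two commutators with the idempotent
cutting out `P`, each divisible by `p`. Conversely `a ↦ F (a ∘ G 1)` sends `End P` back to `R`,
and since every `a` central mod `p` acts on `P` as a scalar mod `p`, the two maps are mutually
inverse mod `p` on central elements (`P` being `p`-torsion free).

The bracket `{z̄, w̄} = [z, w] / p mod p` only sees `z` and `w` mod `p`, as changing a lift
alters `[z, w]` by `p²`. Hence any additive map that is multiplicative mod `p²` on elements
central mod `p` preserves it; composing `σ` with `End P ≅ Sᵐᵒᵖ` is such a map `R → S`.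
-/

def IsCentralMod {A : Type*} [Ring A] (p : ℕ) (a : A) : Prop :=
  ∀ b, ∃ c, a * b - b * a = p • c

section IsCentralMod

variable {A B : Type*} [Ring A] [Ring B] {p : ℕ}

theorem IsCentralMod.map {F : Type*} [FunLike F A B] [RingHomClass F A B] (f : F)
    (hf : Function.Surjective f) {a : A} (ha : IsCentralMod p a) : IsCentralMod p (f a) := by
  intro b
  obtain ⟨b, rfl⟩ := hf b
  obtain ⟨c, hc⟩ := ha b
  exact ⟨f c, by rw [← map_mul, ← map_mul, ← map_sub, hc, map_nsmul]⟩

theorem isCentralMod_op_iff {a : A} :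
    IsCentralMod p (MulOpposite.op a) ↔ IsCentralMod p a := by
  constructor
  · intro ha b
    obtain ⟨c, hc⟩ := ha (MulOpposite.op b)
    refine ⟨-c.unop, ?_⟩
    rw [smul_neg, ← MulOpposite.unop_smul, ← hc]
    simp
  · intro ha b
    obtain ⟨c, hc⟩ := ha b.unop
    refine ⟨-MulOpposite.op c, ?_⟩
    rw [smul_neg, ← MulOpposite.op_smul, ← hc]
    simp

theorem isCentralMod_unop_iff {a : Aᵐᵒᵖ} : IsCentralMod p a.unop ↔ IsCentralMod p a := by
  rw [← isCentralMod_op_iff, MulOpposite.op_unop]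

theorem IsCentralMod.commutator_add_nsmul {a b : A} (ha : IsCentralMod p a)
    (hb : IsCentralMod p b) (α β : A) :
    ∃ c, (a + p • α) * (b + p • β) - (b + p • β) * (a + p • α) =
      a * b - b * a + (p * p) • c := by
  obtain ⟨c₁, h₁⟩ := ha β
  obtain ⟨c₂, h₂⟩ := hb α
  refine ⟨c₁ - c₂ + (α * β - β * α), ?_⟩
  calc (a + p • α) * (b + p • β) - (b + p • β) * (a + p • α)
      = a * b - b * a + p • ((a * β - β * a) - (b * α - α * b)) +
          p • p • (α * β - β * α) := by
        simp only [mul_add, add_mul, smul_mul_assoc, mul_smul_comm, smul_sub, smul_add]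
        abel
    _ = _ := by rw [h₁, h₂, ← smul_sub, mul_smul, add_assoc, ← smul_add, ← smul_add]

theorem IsCentralMod.scalar {ι : Type*} [Fintype ι] [DecidableEq ι] {a : A}
    (ha : IsCentralMod p a) : IsCentralMod p (Matrix.scalar ι a) := by
  intro B
  choose c hc using fun i j => ha (B i j)
  refine ⟨Matrix.of c, ?_⟩
  ext i j
  simp [Matrix.scalar_apply, Matrix.diagonal_mul, Matrix.mul_diagonal, ← hc]

end IsCentralMod

theorem isSMulRegular_of_flat_int (M : Type*) [AddCommGroup M] [Module.Flat ℤ M] {k : ℕ}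
    (hk : k ≠ 0) : IsSMulRegular M k := by
  have := Module.Flat.isSMulRegular_of_isRegular (M := M)
    (IsRegular.of_ne_zero (Int.natCast_ne_zero.2 hk))
  intro x y hxy
  exact this (by simpa only [natCast_zsmul] using hxy)

namespace RedModP

variable {A B : Type} [Ring A] [Ring B] {p : ℕ}

def modCon (A : Type) [Ring A] (p : ℕ) : RingCon A where
  r a b := ∃ c, a = b + p • c
  iseqv :=
    { refl := fun _ => ⟨0, by simp⟩
      symm := fun ⟨c, h⟩ => ⟨-c, by rw [h]; simp⟩
      trans := fun ⟨c, h⟩ ⟨d, h'⟩ => ⟨d + c, by rw [h, h', smul_add, add_assoc]⟩ }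
  add' := fun ⟨c, h⟩ ⟨d, h'⟩ => ⟨c + d, by rw [h, h', smul_add]; abel⟩
  mul' := fun {_ b _ d} ⟨u, hu⟩ ⟨v, hv⟩ => ⟨b * v + u * d + p • (u * v), by
    rw [hu, hv]
    simp only [add_mul, mul_add, smul_mul_assoc, mul_smul_comm, smul_add]
    abel⟩

theorem mk_surjective : Function.Surjective (mk A p) :=
  RingQuot.mkRingHom_surjective _

theorem mk_eq_mk_iff {x y : A} : mk A p x = mk A p y ↔ ∃ c, x = y + p • c := by
  constructor
  · intro h
    have hp : ∀ ⦃a b : A⦄, (a = (p : A) ∧ b = 0) →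
        (modCon A p).mk' a = (modCon A p).mk' b := by
      rintro a b ⟨rfl, rfl⟩
      exact (RingCon.eq _).2 ⟨1, by simp⟩
    have := congrArg (RingQuot.lift ⟨(modCon A p).mk', hp⟩) h
    rw [mk, RingQuot.lift_mkRingHom_apply, RingQuot.lift_mkRingHom_apply] at this
    exact (RingCon.eq _).1 this
  · rintro ⟨c, rfl⟩
    have hp : mk A p (p : A) = 0 := by
      simpa [mk] using RingQuot.mkRingHom_rel (r := fun a b : A => a = (p : A) ∧ b = 0)
        (x := (p : A)) (y := 0) ⟨rfl, rfl⟩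
    rw [map_add, map_nsmul, nsmul_eq_mul, ← map_natCast (mk A p), hp, zero_mul, add_zero]

@[simp]
theorem mk_nsmul_self (a : A) : mk A p (p • a) = 0 := by
  rw [← map_zero (mk A p), mk_eq_mk_iff]
  exact ⟨a, (zero_add _).symm⟩

theorem mk_mem_center_iff {a : A} :
    mk A p a ∈ Subring.center (RedModP A p) ↔ IsCentralMod p a := by
  rw [Subring.mem_center_iff, mk_surjective.forall]
  refine forall_congr' fun b => ?_
  rw [← map_mul, ← map_mul, eq_comm, mk_eq_mk_iff]
  refine exists_congr fun c => ?_
  rw [sub_eq_iff_eq_add']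

noncomputable def map (T : A →+ B) : RedModP A p →+ RedModP B p :=
  (mk A p).toAddMonoidHom.liftOfRightInverse _ (Function.rightInverse_surjInv mk_surjective)
    ⟨(mk B p).toAddMonoidHom.comp T, fun x hx => by
      obtain ⟨c, rfl⟩ := mk_eq_mk_iff.1 ((map_zero (mk A p)).symm ▸ hx : mk A p x = mk A p 0)
      rw [AddMonoidHom.mem_ker, AddMonoidHom.comp_apply, zero_add, map_nsmul]
      exact mk_nsmul_self _⟩

theorem map_mk (T : A →+ B) (a : A) : map (p := p) T (mk A p a) = mk B p (T a) :=
  AddMonoidHom.liftOfRightInverse_comp_apply _ _ _ _ a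

theorem map_mem_center {T : A →+ B} (hT : ∀ {a}, IsCentralMod p a → IsCentralMod p (T a))
    {x : RedModP A p} (hx : x ∈ Subring.center (RedModP A p)) :
    map T x ∈ Subring.center (RedModP B p) := by
  obtain ⟨a, rfl⟩ := mk_surjective x
  rw [map_mk, mk_mem_center_iff]
  exact hT (mk_mem_center_iff.1 hx)

end RedModP

section IsCentralMulModSq

variable {A B C : Type*} [Ring A] [Ring B] [Ring C] {p : ℕ}

structure IsCentralMulModSq (p : ℕ) (T : A →+ B) : Prop where
  isCentralMod_map {a : A} : IsCentralMod p a → IsCentralMod p (T a)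
  map_mul {a b : A} : IsCentralMod p a → IsCentralMod p b →
    ∃ c, T (a * b) = T a * T b + (p * p) • c

theorem IsCentralMulModSq.comp {T : A →+ B} {T' : B →+ C} (h' : IsCentralMulModSq p T')
    (h : IsCentralMulModSq p T) : IsCentralMulModSq p (T'.comp T) where
  isCentralMod_map ha := h'.isCentralMod_map (h.isCentralMod_map ha)
  map_mul ha hb := by
    obtain ⟨c, hc⟩ := h.map_mul ha hb
    obtain ⟨c', hc'⟩ := h'.map_mul (h.isCentralMod_map ha) (h.isCentralMod_map hb)
    refine ⟨c' + T' c, ?_⟩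
    rw [AddMonoidHom.comp_apply, hc, map_add, map_nsmul, hc', smul_add, add_assoc]
    rfl

theorem RingHom.isCentralMulModSq (f : A →+* B)
    (hf : ∀ {a}, IsCentralMod p a → IsCentralMod p (f a)) :
    IsCentralMulModSq p f.toAddMonoidHom :=
  ⟨hf, fun _ _ => ⟨0, by simp⟩⟩

end IsCentralMulModSq

/-- An additive map inducing a ring isomorphism of the centres of `A/pA` and `B/pB` and
multiplicative mod `p²` on lifts of central elements: this is all the mod-`p` Poisson brackets
depend on. -/
structure CentralModSqEquiv (p : ℕ) (A B : Type) [Ring A] [Ring B] where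
  toFun : A →+ B
  invFun : B →+ A
  isCentralMulModSq : IsCentralMulModSq p toFun
  isCentralMod_invFun {b : B} : IsCentralMod p b → IsCentralMod p (invFun b)
  left_inv {a : A} : IsCentralMod p a → ∃ c, invFun (toFun a) = a + p • c
  right_inv {b : B} : IsCentralMod p b → ∃ c, toFun (invFun b) = b + p • c

section CentralModSqEquiv

variable {A B C : Type} [Ring A] [Ring B] [Ring C] {p : ℕ}

def RingEquiv.toCentralModSqEquiv (e : A ≃+* B) : CentralModSqEquiv p A B where
  toFun := (e : A →+* B).toAddMonoidHom
  invFun := (e.symm : B →+* A).toAddMonoidHom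
  isCentralMulModSq := RingHom.isCentralMulModSq _ (IsCentralMod.map e e.surjective)
  isCentralMod_invFun := IsCentralMod.map e.symm e.symm.surjective
  left_inv _ := ⟨0, by simp⟩
  right_inv _ := ⟨0, by simp⟩

namespace CentralModSqEquiv

def trans (e : CentralModSqEquiv p A B) (e' : CentralModSqEquiv p B C) :
    CentralModSqEquiv p A C where
  toFun := e'.toFun.comp e.toFun
  invFun := e.invFun.comp e'.invFun
  isCentralMulModSq := e'.isCentralMulModSq.comp e.isCentralMulModSq
  isCentralMod_invFun hb := e.isCentralMod_invFun (e'.isCentralMod_invFun hb)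
  left_inv ha := by
    obtain ⟨c, hc⟩ := e'.left_inv (e.isCentralMulModSq.isCentralMod_map ha)
    obtain ⟨c', hc'⟩ := e.left_inv ha
    refine ⟨c' + e.invFun c, ?_⟩
    simp only [AddMonoidHom.comp_apply, hc, map_add, map_nsmul, hc', smul_add, add_assoc]
  right_inv hb := by
    obtain ⟨c, hc⟩ := e'.right_inv hb
    obtain ⟨c', hc'⟩ := e.right_inv (e'.isCentralMod_invFun hb)
    refine ⟨c + e'.toFun c', ?_⟩
    simp only [AddMonoidHom.comp_apply, hc, map_add, map_nsmul, hc', smul_add, add_assoc]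

def unop (e : CentralModSqEquiv p Aᵐᵒᵖ Bᵐᵒᵖ) : CentralModSqEquiv p A B where
  toFun := AddMonoidHom.mk' (fun a => (e.toFun (.op a)).unop) (by simp)
  invFun := AddMonoidHom.mk' (fun b => (e.invFun (.op b)).unop) (by simp)
  isCentralMulModSq :=
    { isCentralMod_map := fun ha => isCentralMod_unop_iff.2
        (e.isCentralMulModSq.isCentralMod_map (isCentralMod_op_iff.2 ha))
      map_mul := fun ha hb => by
        obtain ⟨c, hc⟩ := e.isCentralMulModSq.map_mul (isCentralMod_op_iff.2 hb)
          (isCentralMod_op_iff.2 ha)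
        exact ⟨c.unop, by simp [hc, -nsmul_eq_mul]⟩ }
  isCentralMod_invFun hb :=
    isCentralMod_unop_iff.2 (e.isCentralMod_invFun (isCentralMod_op_iff.2 hb))
  left_inv ha := by
    obtain ⟨c, hc⟩ := e.left_inv (isCentralMod_op_iff.2 ha)
    exact ⟨c.unop, by simp [hc, -nsmul_eq_mul]⟩
  right_inv hb := by
    obtain ⟨c, hc⟩ := e.right_inv (isCentralMod_op_iff.2 hb)
    exact ⟨c.unop, by simp [hc, -nsmul_eq_mul]⟩

open RedModP

variable (e : CentralModSqEquiv p A B)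

noncomputable def centerEquiv :
    Subring.center (RedModP A p) ≃+* Subring.center (RedModP B p) where
  toFun x := ⟨map e.toFun x, map_mem_center e.isCentralMulModSq.isCentralMod_map x.2⟩
  invFun y := ⟨map e.invFun y, map_mem_center e.isCentralMod_invFun y.2⟩
  left_inv := by
    rintro ⟨x, hx⟩
    obtain ⟨a, rfl⟩ := mk_surjective x
    refine Subtype.ext ?_
    dsimp only
    rw [map_mk, map_mk, mk_eq_mk_iff]
    exact e.left_inv (mk_mem_center_iff.1 hx)
  right_inv := by
    rintro ⟨y, hy⟩
    obtain ⟨b, rfl⟩ := mk_surjective y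
    refine Subtype.ext ?_
    dsimp only
    rw [map_mk, map_mk, mk_eq_mk_iff]
    exact e.right_inv (mk_mem_center_iff.1 hy)
  map_mul' := by
    rintro ⟨x, hx⟩ ⟨y, hy⟩
    obtain ⟨a, rfl⟩ := mk_surjective x
    obtain ⟨b, rfl⟩ := mk_surjective y
    obtain ⟨c, hc⟩ := e.isCentralMulModSq.map_mul (mk_mem_center_iff.1 hx)
      (mk_mem_center_iff.1 hy)
    refine Subtype.ext ?_
    change map e.toFun (RedModP.mk A p a * RedModP.mk A p b) =
      map e.toFun (RedModP.mk A p a) * map e.toFun (RedModP.mk A p b)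
    rw [← map_mul, map_mk, map_mk, map_mk, ← map_mul, mk_eq_mk_iff]
    exact ⟨p • c, by rw [hc, mul_smul]⟩
  map_add' x y := Subtype.ext (map_add _ _ _)

theorem coe_centerEquiv_mk {a : A} (ha : RedModP.mk A p a ∈ Subring.center (RedModP A p)) :
    (e.centerEquiv ⟨RedModP.mk A p a, ha⟩ : RedModP B p) = RedModP.mk B p (e.toFun a) :=
  map_mk _ _

theorem centerEquiv_bracket (hB : IsSMulRegular B p) {z w u : A} {z' w' u' : B}
    (hz : RedModP.mk A p z ∈ Subring.center (RedModP A p))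
    (hw : RedModP.mk A p w ∈ Subring.center (RedModP A p))
    (hu : RedModP.mk A p u ∈ Subring.center (RedModP A p))
    (hz' : RedModP.mk B p z' ∈ Subring.center (RedModP B p))
    (hw' : RedModP.mk B p w' ∈ Subring.center (RedModP B p))
    (hu' : RedModP.mk B p u' ∈ Subring.center (RedModP B p))
    (hzw : z * w - w * z = (p : A) * u) (hzw' : z' * w' - w' * z' = (p : B) * u')
    (ez : e.centerEquiv ⟨RedModP.mk A p z, hz⟩ = ⟨RedModP.mk B p z', hz'⟩)
    (ew : e.centerEquiv ⟨RedModP.mk A p w, hw⟩ = ⟨RedModP.mk B p w', hw'⟩) :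
    e.centerEquiv ⟨RedModP.mk A p u, hu⟩ = ⟨RedModP.mk B p u', hu'⟩ := by
  set T := e.toFun
  have hzc := mk_mem_center_iff.1 hz
  have hwc := mk_mem_center_iff.1 hw
  obtain ⟨α, hα⟩ : ∃ α, z' = T z + p • α := by
    rw [← mk_eq_mk_iff, ← e.coe_centerEquiv_mk hz, ez]
  obtain ⟨β, hβ⟩ : ∃ β, w' = T w + p • β := by
    rw [← mk_eq_mk_iff, ← e.coe_centerEquiv_mk hw, ew]
  obtain ⟨c, hc⟩ := (e.isCentralMulModSq.isCentralMod_map hzc).commutator_add_nsmul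
    (e.isCentralMulModSq.isCentralMod_map hwc) α β
  obtain ⟨c₁, hc₁⟩ := e.isCentralMulModSq.map_mul hzc hwc
  obtain ⟨c₂, hc₂⟩ := e.isCentralMulModSq.map_mul hwc hzc
  have hTu : T (z * w) - T (w * z) = p • T u := by
    rw [← map_sub, hzw, ← nsmul_eq_mul, map_nsmul]
  have key : p • u' = p • (T u + p • (c₂ - c₁ + c)) :=
    calc p • u' = z' * w' - w' * z' := by rw [hzw', nsmul_eq_mul]
      _ = T z * T w - T w * T z + (p * p) • c := by rw [hα, hβ, hc]
      _ = T (z * w) - T (w * z) + (p * p) • (c₂ - c₁ + c) := by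
        rw [hc₁, hc₂, smul_add, smul_sub]
        abel
      _ = p • (T u + p • (c₂ - c₁ + c)) := by
        rw [hTu]
        simp only [smul_add, mul_smul]
  refine Subtype.ext ?_
  change _ = RedModP.mk B p u'
  rw [coe_centerEquiv_mk, hB key, map_add, mk_nsmul_self, add_zero]

end CentralModSqEquiv

end CentralModSqEquiv

section Modules

variable {R : Type*} [Ring R] {p : ℕ}
  {M N : Type*} [AddCommGroup M] [Module R M] [AddCommGroup N] [Module R N]

theorem LinearMap.apply_apply_of_comp_eq_id {π : M →ₗ[R] N} {i : N →ₗ[R] M}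
    (hπi : π ∘ₗ i = LinearMap.id) (x : N) : π (i x) = x :=
  LinearMap.congr_fun hπi x

theorem IsSMulRegular.of_comp_eq_id {π : M →ₗ[R] N} {i : N →ₗ[R] M}
    (hπi : π ∘ₗ i = LinearMap.id) (hM : IsSMulRegular M p) : IsSMulRegular N p := by
  intro x y h
  have := congrArg π (hM (show p • i x = p • i y by
    rw [← map_nsmul, ← map_nsmul]
    exact congrArg i h))
  simpa [LinearMap.apply_apply_of_comp_eq_id hπi] using this

theorem LinearMap.exists_eq_nsmul_of_forall (hN : IsSMulRegular N p) (D : M →ₗ[R] N)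
    (hD : ∀ x, ∃ y, D x = p • y) : ∃ D' : M →ₗ[R] N, D = p • D' := by
  choose y hy using hD
  refine ⟨{ toFun := y, map_add' := fun a b => hN ?_, map_smul' := fun r a => hN ?_ }, ?_⟩
  · simp only [← hy, map_add, smul_add]
  · simp only [RingHom.id_apply, ← hy, map_smul, smul_comm p r]
  · ext x
    exact hy x

namespace Module.End

def compLeftRingHom (ι : Type*) [Fintype ι] [DecidableEq ι] :
    Module.End R M →+* Module.End R (ι → M) :=
  (endVecRingEquivMatrixEnd ι R M).symm.toRingHom.comp (Matrix.scalar ι)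

theorem compLeftRingHom_apply {ι : Type*} [Fintype ι] [DecidableEq ι] (a : Module.End R M)
    (v : ι → M) :
    compLeftRingHom ι a v = fun j => a (v j) := by
  ext j
  change ∑ k, Matrix.diagonal (fun _ => a) j k (v k) = a (v j)
  rw [Finset.sum_eq_single j (fun k _ hk => by simp [Ne.symm hk]) (by simp)]
  simp

def compress (π : M →ₗ[R] N) (i : N →ₗ[R] M) : Module.End R M →+ Module.End R N where
  toFun a := π ∘ₗ a ∘ₗ i
  map_zero' := by simp
  map_add' a b := by simp [LinearMap.add_comp, LinearMap.comp_add]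

variable {π : M →ₗ[R] N} {i : N →ₗ[R] M}

theorem compress_mul_compress (a b : Module.End R M) :
    compress π i a * compress π i b = compress π i (a * (i ∘ₗ π) * b) :=
  rfl

variable (hπi : π ∘ₗ i = LinearMap.id)
include hπi

theorem compress_mul (a : Module.End R M) (b : Module.End R N) :
    compress π i a * b = compress π i (a * (i ∘ₗ b ∘ₗ π)) := by
  ext x
  simp [compress, LinearMap.apply_apply_of_comp_eq_id hπi]

theorem mul_compress (a : Module.End R M) (b : Module.End R N) :
    b * compress π i a = compress π i ((i ∘ₗ b ∘ₗ π) * a) := by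
  ext x
  simp [compress, LinearMap.apply_apply_of_comp_eq_id hπi]

theorem compress_idem_mul_idem (a : Module.End R M) :
    compress π i ((i ∘ₗ π) * a * (i ∘ₗ π)) = compress π i a := by
  ext x
  simp [compress, LinearMap.apply_apply_of_comp_eq_id hπi]

end Module.End

theorem IsCentralMod.compLeftRingHom {ι : Type*} [Fintype ι] [DecidableEq ι]
    {a : Module.End R M} (ha : IsCentralMod p a) :
    IsCentralMod p (Module.End.compLeftRingHom ι a) :=
  ha.scalar.map (endVecRingEquivMatrixEnd ι R M).symm (RingEquiv.surjective _)

variable {π : M →ₗ[R] N} {i : N →ₗ[R] M}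

theorem IsCentralMod.compress (hπi : π ∘ₗ i = LinearMap.id) {a : Module.End R M}
    (ha : IsCentralMod p a) : IsCentralMod p (Module.End.compress π i a) := by
  intro b
  obtain ⟨c, hc⟩ := ha (i ∘ₗ b ∘ₗ π)
  refine ⟨Module.End.compress π i c, ?_⟩
  rw [Module.End.compress_mul hπi, Module.End.mul_compress hπi, ← map_sub, hc, map_nsmul]

theorem isCentralMulModSq_compress (hπi : π ∘ₗ i = LinearMap.id) :
    IsCentralMulModSq p (Module.End.compress π i) where
  isCentralMod_map := IsCentralMod.compress hπi
  map_mul {a b} ha hb := by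
    set e : Module.End R M := i ∘ₗ π
    have hee : ∀ x, x * e * e = x * e := fun x => by
      ext y
      simp [e, LinearMap.apply_apply_of_comp_eq_id hπi]
    obtain ⟨Da, hDa⟩ := ha e
    obtain ⟨Db, hDb⟩ := hb e
    -- `e a e b e - e a b e = -(e a (1 - e)) ((1 - e) b e)`, a product of commutators with `e`
    have key : e * (a * b) * e = e * (a * e * b) * e - (p * p) • (e * (Da * Db) * e) := by
      have h : (p * p) • (e * (Da * Db) * e) =
          e * ((a * e - e * a) * (b * e - e * b)) * e := by
        rw [hDa, hDb, mul_smul]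
        simp only [smul_mul_assoc, mul_smul_comm]
      have hee' : e * e = e := by simpa using hee 1
      rw [h]
      simp only [mul_sub, sub_mul, ← mul_assoc, hee, hee']
      abel
    refine ⟨-Module.End.compress π i (Da * Db), ?_⟩
    rw [Module.End.compress_mul_compress, ← Module.End.compress_idem_mul_idem hπi (a * b), key,
      map_sub, Module.End.compress_idem_mul_idem hπi, map_nsmul,
      Module.End.compress_idem_mul_idem hπi, smul_neg, sub_eq_add_neg]

def IsHomothetyMod (p : ℕ) (z : R) (a : Module.End R M) : Prop :=
  ∀ x, ∃ y, a x = z • x + p • y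

theorem isHomothetyMod_moduleEndSelf {a : Rᵐᵒᵖ} (ha : IsCentralMod p a) :
    IsHomothetyMod p a.unop (RingEquiv.moduleEndSelf R a) := by
  intro x
  obtain ⟨c, hc⟩ := isCentralMod_unop_iff.2 ha x
  refine ⟨-c, ?_⟩
  rw [smul_neg, ← hc]
  simp

theorem IsHomothetyMod.compLeftRingHom {ι : Type*} [Fintype ι] [DecidableEq ι] {z : R}
    {a : Module.End R M} (ha : IsHomothetyMod p z a) :
    IsHomothetyMod p z (Module.End.compLeftRingHom ι a) := by
  intro v
  choose y hy using fun j => ha (v j)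
  exact ⟨y, by ext j; simp [Module.End.compLeftRingHom_apply, hy]⟩

theorem IsHomothetyMod.compress (hπi : π ∘ₗ i = LinearMap.id) {z : R} {a : Module.End R M}
    (ha : IsHomothetyMod p z a) : IsHomothetyMod p z (Module.End.compress π i a) := by
  intro x
  obtain ⟨y, hy⟩ := ha (i x)
  exact ⟨π y, by simp [Module.End.compress, hy, LinearMap.apply_apply_of_comp_eq_id hπi]⟩

theorem IsHomothetyMod.exists_eq_add_nsmul (hM : IsSMulRegular M p) {z : R}
    {a b : Module.End R M} (ha : IsHomothetyMod p z a) (hb : IsHomothetyMod p z b) :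
    ∃ c, a = b + p • c := by
  obtain ⟨c, hc⟩ := LinearMap.exists_eq_nsmul_of_forall hM (a - b) fun x => by
    obtain ⟨y, hy⟩ := ha x
    obtain ⟨y', hy'⟩ := hb x
    exact ⟨y - y', by rw [LinearMap.sub_apply, hy, hy', smul_sub]; abel⟩
  exact ⟨c, by rw [← hc]; abel⟩

/-- Writing `1 = F (G 1) = ∑ⱼ Fⱼ (Gⱼ)`, the element `x` is `∑ⱼ Fⱼ (Gⱼ) • x`, and moving `a`
across the endomorphisms `y ↦ Fⱼ y • x` modulo `p` turns `a x` into `(∑ⱼ Fⱼ (a Gⱼ)) • x`. -/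
theorem IsCentralMod.isHomothetyMod_of_comp_eq_id {P : Type*} [AddCommGroup P] [Module R P]
    {κ : Type*} [Fintype κ] [DecidableEq κ] {F : (κ → P) →ₗ[R] R} {G : R →ₗ[R] (κ → P)}
    (hFG : F ∘ₗ G = LinearMap.id) {a : Module.End R P} (ha : IsCentralMod p a) :
    IsHomothetyMod p (Module.End.compress F G (Module.End.compLeftRingHom κ a) 1) a := by
  intro x
  let b (j : κ) : Module.End R P := (F ∘ₗ LinearMap.single R (fun _ => P) j).smulRight x
  have hb : ∀ v : κ → P, ∑ j, b j (v j) = F v • x := by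
    intro v
    simp only [b, LinearMap.smulRight_apply, LinearMap.comp_apply, LinearMap.coe_single,
      ← Finset.sum_smul, ← map_sum, Finset.univ_sum_single]
  choose c hc using fun j => ha (b j)
  have hab : ∀ j y, a (b j y) = b j (a y) + p • c j y := fun j y => by
    rw [← LinearMap.smul_apply, ← hc j]
    simp
  refine ⟨∑ j, c j (G 1 j), ?_⟩
  calc a x = a (∑ j, b j (G 1 j)) := by
        rw [hb, LinearMap.apply_apply_of_comp_eq_id hFG, one_smul]
    _ = ∑ j, (b j (a (G 1 j)) + p • c j (G 1 j)) := by simp only [map_sum, hab]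
    _ = _ := by
      rw [Finset.sum_add_distrib, hb, ← Finset.smul_sum]
      simp [Module.End.compress, Module.End.compLeftRingHom_apply]

end Modules

/-- For `P` a retract of `Rⁱ` via `f, g` and `R` a retract of `Pᵏ` via `F, G`, the maps
`Rᵐᵒᵖ → End P`, `z ↦ f ∘ (· * z) ∘ g` and `End P → Rᵐᵒᵖ`, `a ↦ F (a ∘ G 1)`. -/
noncomputable def moritaCentralModSqEquiv {R P : Type} [Ring R] [AddCommGroup P] [Module R P]
    {p : ℕ} {ι κ : Type*} [Fintype ι] [DecidableEq ι] [Fintype κ] [DecidableEq κ]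
    {f : (ι → R) →ₗ[R] P} {g : P →ₗ[R] (ι → R)} {F : (κ → P) →ₗ[R] R} {G : R →ₗ[R] (κ → P)}
    (hfg : f ∘ₗ g = LinearMap.id) (hFG : F ∘ₗ G = LinearMap.id) (hP : IsSMulRegular P p) :
    CentralModSqEquiv p Rᵐᵒᵖ (Module.End R P) where
  toFun := (Module.End.compress f g).comp
    ((Module.End.compLeftRingHom ι).comp (RingEquiv.moduleEndSelf R).toRingHom).toAddMonoidHom
  invFun := (RingEquiv.moduleEndSelf R).symm.toRingHom.toAddMonoidHom.comp
    ((Module.End.compress F G).comp (Module.End.compLeftRingHom κ).toAddMonoidHom)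
  isCentralMulModSq := (isCentralMulModSq_compress hfg).comp
    (RingHom.isCentralMulModSq _ fun ha => (ha.map _ (RingEquiv.surjective _)).compLeftRingHom)
  isCentralMod_invFun hb := (IsCentralMod.compress hFG hb.compLeftRingHom).map
    (RingEquiv.moduleEndSelf R).symm (RingEquiv.surjective _)
  left_inv ha := by
    obtain ⟨c, hc⟩ := ((((isHomothetyMod_moduleEndSelf ha).compLeftRingHom (ι := ι)).compress
      hfg).compLeftRingHom (ι := κ)).compress hFG 1
    exact ⟨.op c, MulOpposite.unop_injective (by simpa [-nsmul_eq_mul] using hc)⟩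
  right_inv hb := by
    have ht := (IsCentralMod.compress hFG hb.compLeftRingHom).map
      (RingEquiv.moduleEndSelf R).symm (RingEquiv.surjective _)
    exact ((isHomothetyMod_moduleEndSelf ht).compLeftRingHom.compress hfg).exists_eq_add_nsmul hP
      (hb.isHomothetyMod_of_comp_eq_id hFG)

/-- Let `R`, `S` be rings, flat over `ℤ`, and suppose
`Sᵒᵖ ≅ End_R(P)` for a finitely generated projective generator `P` of left `R`-modules
(so `R` and `S` are Morita equivalent).  Then for every prime `p` there is an isomorphism
of centers `Z(R/pR) ≅ Z(S/pS)` preserving the mod-`p`-reduction Poisson brackets: if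
central classes `z̄, w̄` (with lifts `z, w` in `R`) correspond to `z̄', w̄'` (with lifts
`z', w'` in `S`), and `zw - wz = p·u`, `z'w' - w'z' = p·u'`, then the class of `u`
corresponds to the class of `u'`. -/
theorem statement19 (R S : Type) [Ring R] [Ring S]
    [Module.Flat ℤ R] [Module.Flat ℤ S]
    (P : Type) [AddCommGroup P] [Module R P]
    [Module.Projective R P] [Module.Finite R P]
    (hgen : ∃ (m : ℕ) (f : (Fin m → P) →ₗ[R] R), Function.Surjective f)
    (iso : Module.End R P ≃+* Sᵐᵒᵖ)
    (p : ℕ) (hp : p.Prime) :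
    ∃ ψ : Subring.center (RedModP R p) ≃+* Subring.center (RedModP S p),
      ∀ (z w u : R) (z' w' u' : S)
        (hz : RedModP.mk R p z ∈ Subring.center (RedModP R p))
        (hw : RedModP.mk R p w ∈ Subring.center (RedModP R p))
        (hu : RedModP.mk R p u ∈ Subring.center (RedModP R p))
        (hz' : RedModP.mk S p z' ∈ Subring.center (RedModP S p))
        (hw' : RedModP.mk S p w' ∈ Subring.center (RedModP S p))
        (hu' : RedModP.mk S p u' ∈ Subring.center (RedModP S p)),
        z * w - w * z = (p : R) * u →
        z' * w' - w' * z' = (p : S) * u' →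
        ψ ⟨RedModP.mk R p z, hz⟩ = ⟨RedModP.mk S p z', hz'⟩ →
        ψ ⟨RedModP.mk R p w, hw⟩ = ⟨RedModP.mk S p w', hw'⟩ →
        ψ ⟨RedModP.mk R p u, hu⟩ = ⟨RedModP.mk S p u', hu'⟩ := by
  obtain ⟨n, f, hf⟩ := Module.Finite.exists_fin' R P
  obtain ⟨g, hfg⟩ := Module.projective_lifting_property f LinearMap.id hf
  obtain ⟨m, F, hF⟩ := hgen
  obtain ⟨G, hFG⟩ := Module.projective_lifting_property F LinearMap.id hF
  have hP : IsSMulRegular P p :=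
    .of_comp_eq_id hfg (Pi.isSMulRegular_iff.2 fun _ => isSMulRegular_of_flat_int R hp.ne_zero)
  let e := ((moritaCentralModSqEquiv hfg hFG hP).trans iso.toCentralModSqEquiv).unop
  exact ⟨e.centerEquiv, fun _ _ _ _ _ _ =>
    e.centerEquiv_bracket (isSMulRegular_of_flat_int S hp.ne_zero)⟩
end
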